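/- Let A be a commutative unital 𝕜-algebra. Let β : A → 𝒥¹(A) be the A-linear map β(a) = a·j₁(1), set Λ¹ := 𝒥¹(A)/im β, and let d : A → Λ¹ be the composition of j₁ with the natural projection. Then d is a 𝕜-linear derivation, and for every A-module P and every derivation X : A → P there exists a unique A-linear map φ^X : Λ¹ → P with X = φ^X ∘ d. Consequently the pair (Λ¹, d) is canonically isomorphic to the module of Kähler differentials Ω_{A/𝕜} together with its universal derivation. -/

import Mathlib

/-- `dop A a f = δ_a(f)`, where `δ_a(f)(p) = f (a • p) - a • f p`. -/
def dop (A : Type*) [CommRing A] {M N : Type*} [AddCommGroup M] [Module A M]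
    [AddCommGroup N] [Module A N] (a : A) (f : M → N) : M → N :=
  fun p => f (a • p) - a • f p

/-- `IsDiffOp A k f` : `f` is a differential operator of order at most `k` over `A`,
i.e. `δ_{a₀}(δ_{a₁}(⋯ δ_{a_k}(f) ⋯)) = 0` for all `a₀, …, a_k ∈ A`. -/
def IsDiffOp (A : Type*) [CommRing A] {M N : Type*} [AddCommGroup M] [Module A M]
    [AddCommGroup N] [Module A N] : ℕ → (M → N) → Prop
  | 0, f => ∀ a : A, dop A a f = 0
  | k + 1, f => ∀ a : A, IsDiffOp A k (dop A a f)

open scoped TensorProduct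

section
variable (𝕜 : Type*) [Field 𝕜] (A : Type*) [CommRing A] [Algebra 𝕜 A]

/-- `ε : A → A ⊗_𝕜 A`,  `ε(c) = 1 ⊗ c`. -/
noncomputable def epsFun : A → A ⊗[𝕜] A := fun c => (1 : A) ⊗ₜ[𝕜] c

/-- The submodule `μ¹ ⊆ A ⊗_𝕜 A` generated by all `δ_{a₀}(δ_{a₁}(ε))(c)`. -/
def muOne : Submodule A (A ⊗[𝕜] A) :=
  Submodule.span A {x | ∃ a₀ a₁ c : A, dop A a₀ (dop A a₁ (epsFun 𝕜 A)) c = x}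

/-- The module of 1-jets `𝒥¹(A) = (A ⊗_𝕜 A) / μ¹`. -/
abbrev JetOne := (A ⊗[𝕜] A) ⧸ muOne 𝕜 A

/-- `j₁ : A → 𝒥¹(A)`. -/
noncomputable def jetOne : A → JetOne 𝕜 A :=
  fun c => Submodule.Quotient.mk (epsFun 𝕜 A c)

/-- `Λ¹ = 𝒥¹(A) / im β`, where `β(a) = a • j₁(1)`, so `im β = A • j₁(1)`. -/
abbrev LambdaOne := JetOne 𝕜 A ⧸ Submodule.span A {jetOne 𝕜 A 1}

/-- `d : A → Λ¹`, the composition of `j₁` with the natural projection. -/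
noncomputable def dFun : A → LambdaOne 𝕜 A :=
  fun a => Submodule.Quotient.mk (jetOne 𝕜 A a)

end

/-!
Modulo `μ¹` the class of `a ⊗ b` is `a • j₁(b)`, and the generator `δ_a(δ_b(ε))(1)` of `μ¹` is
`1 ⊗ ab - a ⊗ b - b ⊗ a + ab ⊗ 1`; so in `Λ¹`, where `j₁(1)` is killed, it becomes the Leibniz
rule for `d`. Conversely a derivation `X : A → P` induces `a ⊗ b ↦ a • X b` on `A ⊗_𝕜 A`, which
kills `μ¹` by the Leibniz rule and `1 ⊗ 1` because `X 1 = 0`; uniqueness holds because `d(A)`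
generates `Λ¹`. Comparing the universal properties of `Λ¹` and `Ω_{A/𝕜}` gives the isomorphism.
-/

section
variable (𝕜 : Type*) [Field 𝕜] (A : Type*) [CommRing A] [Algebra 𝕜 A]

lemma dop_dop_epsFun (a b c : A) :
    dop A a (dop A b (epsFun 𝕜 A)) c =
      (1 : A) ⊗ₜ[𝕜] (a * b * c) - a ⊗ₜ[𝕜] (b * c) - b ⊗ₜ[𝕜] (a * c) + (a * b) ⊗ₜ[𝕜] c := by
  simp only [dop, epsFun, smul_eq_mul, smul_sub, TensorProduct.smul_tmul', mul_one]
  ring_nf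

noncomputable def lambdaOneMk : A ⊗[𝕜] A →ₗ[A] LambdaOne 𝕜 A :=
  (Submodule.mkQ _).comp (Submodule.mkQ _)

variable {𝕜 A}

lemma lambdaOneMk_tmul (a b : A) : lambdaOneMk 𝕜 A (a ⊗ₜ b) = a • dFun 𝕜 A b := by
  rw [← mul_one a, ← smul_eq_mul, ← TensorProduct.smul_tmul', map_smul, smul_eq_mul, mul_one]
  rfl

lemma muOne_le_ker_lambdaOneMk : muOne 𝕜 A ≤ LinearMap.ker (lambdaOneMk 𝕜 A) :=
  (Submodule.ker_mkQ _).symm.le.trans (LinearMap.ker_le_ker_comp _ _)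

lemma dFun_one : dFun 𝕜 A 1 = 0 :=
  (Submodule.Quotient.mk_eq_zero _).2 (Submodule.mem_span_singleton_self _)

lemma dFun_mul (a b : A) : dFun 𝕜 A (a * b) = a • dFun 𝕜 A b + b • dFun 𝕜 A a := by
  have h := muOne_le_ker_lambdaOneMk (𝕜 := 𝕜) (Submodule.subset_span ⟨a, b, (1 : A), rfl⟩)
  rw [LinearMap.mem_ker, dop_dop_epsFun] at h
  simp only [map_add, map_sub, lambdaOneMk_tmul, mul_one, one_smul, dFun_one, smul_zero,
    add_zero] at h
  rw [← sub_eq_zero, ← h]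
  abel

variable (𝕜 A) in
noncomputable def dDerivation : Derivation 𝕜 A (LambdaOne 𝕜 A) where
  toLinearMap := ((lambdaOneMk 𝕜 A).restrictScalars 𝕜).comp (TensorProduct.mk 𝕜 A A 1)
  map_one_eq_zero' := dFun_one
  leibniz' := dFun_mul

@[simp]
lemma dDerivation_apply (a : A) : dDerivation 𝕜 A a = dFun 𝕜 A a := rfl

namespace LambdaOne

variable {P : Type*} [AddCommGroup P] [Module A P]

lemma hom_ext {f g : LambdaOne 𝕜 A →ₗ[A] P} (h : ∀ a, f (dFun 𝕜 A a) = g (dFun 𝕜 A a)) :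
    f = g :=
  Submodule.linearMap_qext _ <| Submodule.linearMap_qext _ <| LinearMap.ext fun x => by
    change f (lambdaOneMk 𝕜 A x) = g (lambdaOneMk 𝕜 A x)
    induction x using TensorProduct.induction_on with
    | zero => simp only [map_zero]
    | tmul a b => rw [lambdaOneMk_tmul, map_smul, map_smul, h]
    | add x y hx hy => simp only [map_add, hx, hy]

variable [Module 𝕜 P] [IsScalarTower 𝕜 A P]

lemma muOne_le_ker_tensorProductTo (D : Derivation 𝕜 A P) :
    muOne 𝕜 A ≤ LinearMap.ker D.tensorProductTo := by
  rw [muOne, Submodule.span_le]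
  rintro _ ⟨a, b, c, rfl⟩
  rw [SetLike.mem_coe, LinearMap.mem_ker, dop_dop_epsFun]
  simp only [map_add, map_sub, Derivation.tensorProductTo_tmul, Derivation.leibniz,
    smul_add, smul_smul]
  module

noncomputable def lift (D : Derivation 𝕜 A P) : LambdaOne 𝕜 A →ₗ[A] P :=
  Submodule.liftQ _ (Submodule.liftQ _ D.tensorProductTo (muOne_le_ker_tensorProductTo D)) <| by
    rw [Submodule.span_le, Set.singleton_subset_iff]
    exact (Derivation.tensorProductTo_tmul D 1 1).trans (by simp)

@[simp]
lemma lift_dFun (D : Derivation 𝕜 A P) (a : A) : lift D (dFun 𝕜 A a) = D a :=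
  (Derivation.tensorProductTo_tmul D 1 a).trans (one_smul A _)

lemma existsUnique_comp_dFun (D : Derivation 𝕜 A P) :
    ∃! φ : LambdaOne 𝕜 A →ₗ[A] P, ⇑D = ⇑φ ∘ dFun 𝕜 A :=
  ⟨lift D, funext fun a => (lift_dFun D a).symm,
    fun _ hφ => hom_ext fun a => (congrFun hφ a).symm.trans (lift_dFun D a).symm⟩

variable (𝕜 A) in
noncomputable def equivKaehlerDifferential : LambdaOne 𝕜 A ≃ₗ[A] KaehlerDifferential 𝕜 A :=
  LinearEquiv.ofLinearMap (lift (KaehlerDifferential.D 𝕜 A))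
    (dDerivation 𝕜 A).liftKaehlerDifferential
    (Derivation.liftKaehlerDifferential_unique _ _ <| by ext; simp)
    (hom_ext fun a => by simp)

lemma equivKaehlerDifferential_dFun (a : A) :
    equivKaehlerDifferential 𝕜 A (dFun 𝕜 A a) = KaehlerDifferential.D 𝕜 A a :=
  lift_dFun _ a

end LambdaOne

end

/-- `d : A → Λ¹ = 𝒥¹(A)/im β` is a `𝕜`-linear derivation; every
derivation `X : A → P` factors uniquely as `X = φ^X ∘ d` with `φ^X : Λ¹ → P`
`A`-linear;  consequently `(Λ¹, d)` is canonically isomorphic to the module of Kähler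
differentials `Ω_{A/𝕜}` with its universal derivation. -/
theorem lambdaOne_universal_and_kaehler
    (𝕜 : Type*) [Field 𝕜] (A : Type*) [CommRing A] [Algebra 𝕜 A] :
    -- d is a 𝕜-linear derivation
    (IsLinearMap 𝕜 (dFun 𝕜 A) ∧
      ∀ a b : A, dFun 𝕜 A (a * b) = a • dFun 𝕜 A b + b • dFun 𝕜 A a) ∧
    -- universal property among derivations with values in arbitrary A-modules
    (∀ (P : Type*) [AddCommGroup P] [Module 𝕜 P] [Module A P] [IsScalarTower 𝕜 A P],
      ∀ X : A →ₗ[𝕜] P, (∀ a b : A, X (a * b) = a • X b + b • X a) →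
        ∃! φ : LambdaOne 𝕜 A →ₗ[A] P, ⇑X = ⇑φ ∘ dFun 𝕜 A) ∧
    -- canonical isomorphism with the Kähler differentials
    (∃ e : LambdaOne 𝕜 A ≃ₗ[A] KaehlerDifferential 𝕜 A,
      ∀ a : A, e (dFun 𝕜 A a) = KaehlerDifferential.D 𝕜 A a) :=
  ⟨⟨(dDerivation 𝕜 A).toLinearMap.isLinear, dFun_mul⟩,
    fun _ _ _ _ _ X hX => LambdaOne.existsUnique_comp_dFun (Derivation.mk' X hX),
    ⟨LambdaOne.equivKaehlerDifferential 𝕜 A, LambdaOne.equivKaehlerDifferential_dFun⟩⟩
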